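/- (Sinai's Lemma) Let φ : Σ_A → ℝ satisfy var_n(φ) ≤ Cθ^n for some C > 0 and 0 < θ < 1, where var_n(φ) = sup{|φ(x) − φ(y)| : x_k = y_k for all |k| ≤ n}. Then there exist functions φ⁺, γ⁺ : Σ_A → ℝ such that φ⁺ − φ = γ⁺ − γ⁺∘σ, φ⁺ depends only on the coordinates with index > 0 (i.e., φ⁺(x) = φ⁺(y) whenever x_n = y_n for all n > 0), γ⁺ is continuous, and φ⁺ satisfies var_n(φ⁺) ≤ C'θ'^n for some C' > 0 and θ' = √θ. -/

import Mathlib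

/-- The two-sided subshift of finite type determined by a 0-1 matrix `A`. -/
def SigmaA (d : ℕ) (A : Matrix (Fin d) (Fin d) ℕ) : Type :=
  {x : ℤ → Fin d // ∀ n : ℤ, A (x n) (x (n + 1)) = 1}

/-- The shift map on the two-sided subshift. -/
def shiftMap (d : ℕ) (A : Matrix (Fin d) (Fin d) ℕ) : SigmaA d A → SigmaA d A :=
  fun x => ⟨fun n => x.val (n + 1), fun n => by simpa using x.property (n + 1)⟩

instance (d : ℕ) (A : Matrix (Fin d) (Fin d) ℕ) : TopologicalSpace (SigmaA d A) :=
  instTopologicalSpaceSubtype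

/-!
Choose for each `x` a point `r x` (`fillPast x`) that agrees with `x` in all coordinates `≥ 0`
and whose past depends only on `x₀`. Since `σʲ x` and `σʲ (r x)` agree on `|k| ≤ j`, the transfer
function `u x = ∑ⱼ (φ (σʲ (r x)) - φ (σʲ x))` (`transfer φ`) converges, and telescoping gives
`ψ := φ + u - u ∘ σ = φ ∘ r + ∑ⱼ (φ (σʲ⁺¹ (r x)) - φ (σʲ (r (σ x))))` (`futurePart φ`), which
depends only on the coordinates `≥ 0`. If `x` and `y` agree on `|k| ≤ n`, the `j`-th terms of `u x` and `u y` differ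
by at most `2 C min (θ ^ (n - j)) (θ ^ j)`, and these sum to `O(√θ ^ n)`; so `u`, and with it
`ψ`, has variations `O(√θ ^ n)`. Finally `φ⁺ = ψ ∘ σ` is cohomologous to `ψ`, hence to `φ`, and
depends only on the coordinates `> 0`.
-/

open Function Topology

lemma summable_min_pow {θ : ℝ} (hθ0 : 0 ≤ θ) (hθ1 : θ < 1) (n : ℕ) :
    Summable fun j : ℕ => min (θ ^ (n - j)) (θ ^ j) :=
  (summable_geometric_of_lt_one hθ0 hθ1).of_nonneg_of_le
    (fun j => le_min (by positivity) (by positivity)) fun j => min_le_right _ _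

lemma tsum_min_pow_le {θ : ℝ} (hθ0 : 0 ≤ θ) (hθ1 : θ < 1) (n : ℕ) :
    ∑' j : ℕ, min (θ ^ (n - j)) (θ ^ j) ≤ (1 + √θ) / (1 - √θ) * √θ ^ n := by
  set s := √θ
  have hs0 : 0 ≤ s := Real.sqrt_nonneg θ
  have hs1 : s < 1 := (Real.sqrt_lt' one_pos).2 (by rwa [one_pow])
  have hθ : θ = s ^ 2 := (Real.sq_sqrt hθ0).symm
  have hgeom : HasSum (fun m : ℤ => s ^ m.natAbs) ((1 - s)⁻¹ + s * (1 - s)⁻¹) := by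
    refine HasSum.of_nat_of_neg_add_one ?_ ?_
    · simpa using hasSum_geometric_of_lt_one hs0 hs1
    · refine ((hasSum_geometric_of_lt_one hs0 hs1).mul_left s).congr_fun fun k => ?_
      rw [← pow_succ']
      congr 1
  -- `min (θ ^ (n - j)) (θ ^ j) ≤ √θ ^ (n + |n - 2j|)`, and `j ↦ n - 2j` is injective into `ℤ`.
  have hle := hasSum_le_inj (fun j : ℕ => (n : ℤ) - 2 * j) (fun i j h => by simp only at h; omega)
    (fun m _ => by positivity) (fun j => ?_) (summable_min_pow hθ0 hθ1 n).hasSum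
    (hgeom.mul_left (s ^ n))
  · calc _ ≤ _ := hle
      _ = _ := by field_simp
  · rw [hθ, ← pow_mul, ← pow_mul, ← pow_add]
    rcases le_total (2 * j) n with h | h
    · exact min_le_of_left_le (pow_le_pow_of_le_one hs0 hs1.le (by omega))
    · exact min_le_of_right_le (pow_le_pow_of_le_one hs0 hs1.le (by omega))

lemma Continuous.exists_forall_abs_sub_le {X : Type*} [TopologicalSpace X] [CompactSpace X]
    {f : X → ℝ} (hf : Continuous f) : ∃ B, ∀ x y, |f x - f y| ≤ B := by
  obtain ⟨M, hM⟩ := isCompact_univ.exists_bound_of_continuousOn hf.continuousOn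
  refine ⟨2 * M, fun x y => (abs_sub _ _).trans ?_⟩
  have hx : |f x| ≤ M := hM x trivial
  have hy : |f y| ≤ M := hM y trivial
  linarith

namespace SigmaA

variable {d : ℕ} {A : Matrix (Fin d) (Fin d) ℕ}

def Agree (n : ℕ) (x y : SigmaA d A) : Prop :=
  ∀ k : ℤ, |k| ≤ (n : ℤ) → x.val k = y.val k

def VariationLE (f : SigmaA d A → ℝ) (c θ : ℝ) : Prop :=
  ∀ (n : ℕ) (x y : SigmaA d A), Agree n x y → |f x - f y| ≤ c * θ ^ n

theorem shiftMap_iterate_val (j : ℕ) (x : SigmaA d A) (k : ℤ) :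
    ((shiftMap d A)^[j] x).val k = x.val (k + j) := by
  induction j generalizing x with
  | zero => simp
  | succ j ih =>
    rw [iterate_succ_apply, ih]
    simp only [shiftMap, Nat.cast_succ]
    ring_nf

theorem Agree.val_zero {n : ℕ} {x y : SigmaA d A} (h : Agree n x y) : x.val 0 = y.val 0 :=
  h 0 (by simp)

theorem Agree.shiftMap_iterate {n j : ℕ} {x y : SigmaA d A} (h : Agree (n + j) x y) :
    Agree n ((shiftMap d A)^[j] x) ((shiftMap d A)^[j] y) := fun k hk => by
  simp only [shiftMap_iterate_val]
  exact h _ (by rw [abs_le] at hk ⊢; push_cast; omega)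

theorem agree_shiftMap_iterate_of_forall_nonneg {x y : SigmaA d A}
    (h : ∀ k : ℤ, 0 ≤ k → x.val k = y.val k) (j : ℕ) :
    Agree j ((shiftMap d A)^[j] x) ((shiftMap d A)^[j] y) := fun k hk => by
  simp only [shiftMap_iterate_val]
  exact h _ (by rw [abs_le] at hk; omega)

theorem continuous_val (k : ℤ) : Continuous fun x : SigmaA d A => x.val k :=
  (continuous_apply k).comp continuous_subtype_val

theorem eventually_agree (n : ℕ) (x : SigmaA d A) : ∀ᶠ y in 𝓝 x, Agree n y x := by
  have hfin : (Set.Icc (-(n : ℤ)) n).Finite := Set.finite_Icc _ _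
  filter_upwards [hfin.eventually_all.2 fun k _ =>
    (continuous_val k).continuousAt.eventually_mem ((isOpen_discrete {x.val k}).mem_nhds rfl)]
    with y hy k hk
  exact hy k (abs_le.1 hk)

theorem continuous_shiftMap : Continuous (shiftMap d A) :=
  (continuous_pi fun k => continuous_val (k + 1)).subtype_mk _

instance : CompactSpace (SigmaA d A) := by
  have hclosed : IsClosed {x : ℤ → Fin d | ∀ n : ℤ, A (x n) (x (n + 1)) = 1} := by
    simp only [Set.ofPred_forall]
    exact isClosed_iInter fun n => isClosed_eq (by fun_prop) continuous_const
  exact isCompact_iff_compactSpace.1 hclosed.isCompact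

namespace VariationLE

variable {f g : SigmaA d A → ℝ} {c c' θ θ' : ℝ}

theorem nonneg (hf : VariationLE f c θ) (x : SigmaA d A) : 0 ≤ c := by
  simpa using hf 0 x x fun _ _ => rfl

theorem mono (hf : VariationLE f c θ) (hc : c ≤ c') (hθ0 : 0 ≤ θ) (hθ : θ ≤ θ') :
    VariationLE f c' θ' := fun n x y h =>
  (hf n x y h).trans <|
    mul_le_mul hc (pow_le_pow_left₀ hθ0 hθ n) (by positivity) ((hf.nonneg x).trans hc)

theorem add (hf : VariationLE f c θ) (hg : VariationLE g c' θ) :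
    VariationLE (f + g) (c + c') θ := fun n x y h => by
  have hfn := hf n x y h
  have hgn := hg n x y h
  calc |(f + g) x - (f + g) y| = |(f x - f y) + (g x - g y)| := by simp only [Pi.add_apply]; ring_nf
    _ ≤ |f x - f y| + |g x - g y| := abs_add_le _ _
    _ ≤ (c + c') * θ ^ n := by linarith

theorem sub (hf : VariationLE f c θ) (hg : VariationLE g c' θ) :
    VariationLE (f - g) (c + c') θ := fun n x y h => by
  have hfn := hf n x y h
  have hgn := hg n x y h
  calc |(f - g) x - (f - g) y| = |(f x - f y) - (g x - g y)| := by simp only [Pi.sub_apply]; ring_nf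
    _ ≤ |f x - f y| + |g x - g y| := abs_sub _ _
    _ ≤ (c + c') * θ ^ n := by linarith

theorem continuous (hf : VariationLE f c θ) (hθ0 : 0 ≤ θ) (hθ1 : θ < 1) : Continuous f := by
  refine continuous_iff_continuousAt.2 fun x => Metric.tendsto_nhds.2 fun ε hε => ?_
  have hlim : Filter.Tendsto (fun n : ℕ => c * θ ^ n) Filter.atTop (𝓝 0) := by
    simpa using (tendsto_pow_atTop_nhds_zero_of_lt_one hθ0 hθ1).const_mul c
  obtain ⟨n, hn⟩ := (hlim.eventually_lt_const hε).exists
  filter_upwards [eventually_agree n x] with y hy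
  exact (hf n y x hy).trans_lt hn

theorem comp_shiftMap {s : ℝ} (hf : VariationLE f c s) (hs0 : 0 < s) (hs1 : s < 1) :
    ∃ c', VariationLE (f ∘ shiftMap d A) c' s := by
  obtain ⟨B, hB⟩ := (hf.continuous hs0.le hs1).exists_forall_abs_sub_le
  refine ⟨B + c / s, fun n x y h => ?_⟩
  have hB0 : 0 ≤ B := by simpa using hB x x
  have hc0 : 0 ≤ c / s := div_nonneg (hf.nonneg x) hs0.le
  cases n with
  | zero => simpa using (hB _ _).trans (le_add_of_nonneg_right hc0)
  | succ n =>
    calc |f (shiftMap d A x) - f (shiftMap d A y)| ≤ c * s ^ n :=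
          hf n _ _ (h.shiftMap_iterate (j := 1))
      _ = c / s * s ^ (n + 1) := by field_simp; ring
      _ ≤ (B + c / s) * s ^ (n + 1) := by gcongr; linarith

theorem abs_sub_iterate_le (hf : VariationLE f c θ) {x y : SigmaA d A}
    (h : ∀ k : ℤ, 0 ≤ k → x.val k = y.val k) (j : ℕ) :
    |f ((shiftMap d A)^[j] x) - f ((shiftMap d A)^[j] y)| ≤ c * θ ^ j :=
  hf j _ _ (agree_shiftMap_iterate_of_forall_nonneg h j)

end VariationLE

-- By proof irrelevance this depends on `x` only through `x.val 0`.
noncomputable def pastOf (x : SigmaA d A) : SigmaA d A :=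
  Classical.choose (p := fun z : SigmaA d A => z.val 0 = x.val 0) ⟨x, rfl⟩

theorem pastOf_val_zero (x : SigmaA d A) : (pastOf x).val 0 = x.val 0 :=
  Classical.choose_spec (p := fun z : SigmaA d A => z.val 0 = x.val 0) ⟨x, rfl⟩

theorem pastOf_congr {x y : SigmaA d A} (h : x.val 0 = y.val 0) : pastOf x = pastOf y := by
  simp only [pastOf, h]

noncomputable def fillPast (x : SigmaA d A) : SigmaA d A :=
  ⟨fun k => if 0 ≤ k then x.val k else (pastOf x).val k, fun n => by
    rcases lt_trichotomy n (-1) with h | rfl | h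
    · simpa [if_neg (show ¬ 0 ≤ n by omega), if_neg (show ¬ 0 ≤ n + 1 by omega)]
        using (pastOf x).property n
    · simpa [← pastOf_val_zero x] using (pastOf x).property (-1)
    · simpa [if_pos (show 0 ≤ n by omega), if_pos (show 0 ≤ n + 1 by omega)]
        using x.property n⟩

theorem fillPast_val_of_nonneg (x : SigmaA d A) {k : ℤ} (hk : 0 ≤ k) :
    (fillPast x).val k = x.val k :=
  if_pos hk

theorem fillPast_congr {x y : SigmaA d A} (h : ∀ k : ℤ, 0 ≤ k → x.val k = y.val k) :
    fillPast x = fillPast y := by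
  refine Subtype.ext (funext fun k => ?_)
  simp only [fillPast, pastOf_congr (h 0 le_rfl)]
  split_ifs with hk
  exacts [h k hk, rfl]

theorem Agree.fillPast {n : ℕ} {x y : SigmaA d A} (h : Agree n x y) :
    Agree n (fillPast x) (fillPast y) := fun k hk => by
  simp only [SigmaA.fillPast, pastOf_congr h.val_zero]
  split_ifs
  exacts [h k hk, rfl]

noncomputable def transfer (φ : SigmaA d A → ℝ) (x : SigmaA d A) : ℝ :=
  ∑' j : ℕ, (φ ((shiftMap d A)^[j] (fillPast x)) - φ ((shiftMap d A)^[j] x))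

noncomputable def futurePart (φ : SigmaA d A → ℝ) (x : SigmaA d A) : ℝ :=
  φ (fillPast x) + ∑' j : ℕ,
    (φ ((shiftMap d A)^[j + 1] (fillPast x)) - φ ((shiftMap d A)^[j] (fillPast (shiftMap d A x))))

theorem futurePart_congr (φ : SigmaA d A → ℝ) {x y : SigmaA d A}
    (h : ∀ k : ℤ, 0 ≤ k → x.val k = y.val k) : futurePart φ x = futurePart φ y := by
  rw [futurePart, futurePart, fillPast_congr h,
    fillPast_congr (x := shiftMap d A x) (y := shiftMap d A y) fun k hk => h (k + 1) (by omega)]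

variable {φ : SigmaA d A → ℝ} {C θ : ℝ}

theorem VariationLE.summable_transfer (hφ : VariationLE φ C θ) (hθ0 : 0 ≤ θ) (hθ1 : θ < 1)
    (x : SigmaA d A) :
    Summable fun j : ℕ => φ ((shiftMap d A)^[j] (fillPast x)) - φ ((shiftMap d A)^[j] x) :=
  ((summable_geometric_of_lt_one hθ0 hθ1).mul_left C).of_norm_bounded
    fun j => hφ.abs_sub_iterate_le (fun _ => fillPast_val_of_nonneg x) j

theorem VariationLE.futurePart_sub (hφ : VariationLE φ C θ) (hθ0 : 0 ≤ θ) (hθ1 : θ < 1)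
    (x : SigmaA d A) :
    futurePart φ x - φ x = transfer φ x - transfer φ (shiftMap d A x) := by
  have hσ : ∀ j, (shiftMap d A)^[j] (shiftMap d A x) = (shiftMap d A)^[j + 1] x := fun j =>
    (iterate_succ_apply _ _ _).symm
  have hx := hφ.summable_transfer hθ0 hθ1 x
  have hσx := hφ.summable_transfer hθ0 hθ1 (shiftMap d A x)
  simp only [hσ] at hσx
  have htelescope :
      ∑' j : ℕ, (φ ((shiftMap d A)^[j + 1] (fillPast x)) -
        φ ((shiftMap d A)^[j] (fillPast (shiftMap d A x)))) =
      ∑' j : ℕ, (φ ((shiftMap d A)^[j + 1] (fillPast x)) - φ ((shiftMap d A)^[j + 1] x)) -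
      ∑' j : ℕ, (φ ((shiftMap d A)^[j] (fillPast (shiftMap d A x))) -
        φ ((shiftMap d A)^[j + 1] x)) := by
    rw [← ((summable_nat_add_iff 1).2 hx).tsum_sub hσx]
    exact tsum_congr fun j => by ring
  rw [futurePart, transfer, transfer, hx.tsum_eq_zero_add, htelescope]
  simp only [hσ, iterate_zero_apply]
  ring

theorem VariationLE.transfer (hφ : VariationLE φ C θ) (hθ0 : 0 ≤ θ) (hθ1 : θ < 1) :
    VariationLE (transfer φ) (2 * C * ((1 + √θ) / (1 - √θ))) √θ := by
  intro n x y h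
  have hC : 0 ≤ C := hφ.nonneg x
  have hterm : ∀ j : ℕ,
      ‖(φ ((shiftMap d A)^[j] (fillPast x)) - φ ((shiftMap d A)^[j] x)) -
        (φ ((shiftMap d A)^[j] (fillPast y)) - φ ((shiftMap d A)^[j] y))‖ ≤
      2 * C * min (θ ^ (n - j)) (θ ^ j) := by
    intro j
    rw [Real.norm_eq_abs, mul_min_of_nonneg _ _ (by positivity)]
    have hxj := hφ.abs_sub_iterate_le (fun _ => fillPast_val_of_nonneg x) j
    have hyj := hφ.abs_sub_iterate_le (fun _ => fillPast_val_of_nonneg y) j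
    refine le_min ?_ ((abs_sub _ _).trans (by linarith))
    rcases le_or_gt j n with hj | hj
    · have hag : Agree (n - j + j) x y := by rwa [Nat.sub_add_cancel hj]
      have hr := hφ (n - j) _ _ hag.fillPast.shiftMap_iterate
      have hxy := hφ (n - j) _ _ hag.shiftMap_iterate
      calc _ = |(φ ((shiftMap d A)^[j] (fillPast x)) - φ ((shiftMap d A)^[j] (fillPast y))) -
              (φ ((shiftMap d A)^[j] x) - φ ((shiftMap d A)^[j] y))| := by ring_nf
        _ ≤ _ := (abs_sub _ _).trans (by linarith)
    · have hθj : θ ^ j ≤ 1 := pow_le_one₀ hθ0 hθ1.le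
      rw [Nat.sub_eq_zero_of_le hj.le, pow_zero]
      nlinarith [abs_sub (φ ((shiftMap d A)^[j] (fillPast x)) - φ ((shiftMap d A)^[j] x))
        (φ ((shiftMap d A)^[j] (fillPast y)) - φ ((shiftMap d A)^[j] y))]
  rw [SigmaA.transfer, SigmaA.transfer,
    ← (hφ.summable_transfer hθ0 hθ1 x).tsum_sub (hφ.summable_transfer hθ0 hθ1 y)]
  calc _ ≤ 2 * C * ∑' j : ℕ, min (θ ^ (n - j)) (θ ^ j) :=
        tsum_of_norm_bounded ((summable_min_pow hθ0 hθ1 n).hasSum.mul_left (2 * C)) hterm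
    _ ≤ 2 * C * ((1 + √θ) / (1 - √θ) * √θ ^ n) := by gcongr; exact tsum_min_pow_le hθ0 hθ1 n
    _ = _ := by ring

end SigmaA

theorem sinai_lemma_general (d : ℕ) (A : Matrix (Fin d) (Fin d) ℕ)
    (φ : SigmaA d A → ℝ) (C θ : ℝ) (hθ0 : 0 < θ) (hθ1 : θ < 1)
    (hvar : ∀ (n : ℕ) (x y : SigmaA d A),
      (∀ k : ℤ, |k| ≤ (n : ℤ) → x.val k = y.val k) → |φ x - φ y| ≤ C * θ ^ n) :
    ∃ (φp γp : SigmaA d A → ℝ),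
      (∀ x, φp x - φ x = γp x - γp (shiftMap d A x)) ∧
      (∀ x y : SigmaA d A, (∀ n : ℤ, 0 < n → x.val n = y.val n) → φp x = φp y) ∧
      Continuous γp ∧
      (∃ C' : ℝ, 0 < C' ∧ ∀ (n : ℕ) (x y : SigmaA d A),
        (∀ k : ℤ, |k| ≤ (n : ℤ) → x.val k = y.val k) →
          |φp x - φp y| ≤ C' * (Real.sqrt θ) ^ n) := by
  have hφ : SigmaA.VariationLE φ C θ := hvar
  have hs0 : 0 < √θ := Real.sqrt_pos.2 hθ0
  have hs1 : √θ < 1 := (Real.sqrt_lt' one_pos).2 (by rwa [one_pow])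
  have hθs : θ ≤ √θ := Real.le_sqrt_of_sq_le (by nlinarith)
  have hu := hφ.transfer hθ0.le hθ1
  obtain ⟨_, huσ⟩ := hu.comp_shiftMap hs0 hs1
  have hψ_eq : SigmaA.futurePart φ =
      φ + SigmaA.transfer φ - SigmaA.transfer φ ∘ shiftMap d A := funext fun x => by
    simp only [Pi.add_apply, Pi.sub_apply, comp_apply]
    linarith [hφ.futurePart_sub hθ0.le hθ1 x]
  have hψ : SigmaA.VariationLE (SigmaA.futurePart φ) _ √θ :=
    hψ_eq ▸ ((hφ.mono le_rfl hθ0.le hθs).add hu).sub huσ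
  obtain ⟨c, hψσ⟩ := hψ.comp_shiftMap hs0 hs1
  refine ⟨SigmaA.futurePart φ ∘ shiftMap d A, SigmaA.transfer φ ∘ shiftMap d A - φ, fun x => ?_,
    fun x y h => SigmaA.futurePart_congr φ fun k hk => h (k + 1) (by omega),
    ((hu.continuous hs0.le hs1).comp SigmaA.continuous_shiftMap).sub (hφ.continuous hθ0.le hθ1),
    max c 1, by positivity, hψσ.mono (le_max_left _ _) hs0.le le_rfl⟩
  simp only [comp_apply, Pi.sub_apply]
  linarith [hφ.futurePart_sub hθ0.le hθ1 (shiftMap d A x)]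

/-- Sinai's Lemma: if `var_n(φ) ≤ C θ^n` with `C > 0`, `0 < θ < 1`, then
there are `φ⁺, γ⁺` with `φ⁺ − φ = γ⁺ − γ⁺∘σ`, `φ⁺` depending only on the coordinates of
index `> 0`, `γ⁺` continuous, and `var_n(φ⁺) ≤ C' (√θ)^n` for some `C' > 0`. -/
theorem sinai_lemma (d : ℕ) (A : Matrix (Fin d) (Fin d) ℕ)
    (φ : SigmaA d A → ℝ) (C θ : ℝ) (hC : 0 < C) (hθ0 : 0 < θ) (hθ1 : θ < 1)
    (hvar : ∀ (n : ℕ) (x y : SigmaA d A),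
      (∀ k : ℤ, |k| ≤ (n : ℤ) → x.val k = y.val k) → |φ x - φ y| ≤ C * θ ^ n) :
    ∃ (φp γp : SigmaA d A → ℝ),
      (∀ x, φp x - φ x = γp x - γp (shiftMap d A x)) ∧
      (∀ x y : SigmaA d A, (∀ n : ℤ, 0 < n → x.val n = y.val n) → φp x = φp y) ∧
      Continuous γp ∧
      (∃ C' : ℝ, 0 < C' ∧ ∀ (n : ℕ) (x y : SigmaA d A),
        (∀ k : ℤ, |k| ≤ (n : ℤ) → x.val k = y.val k) →
          |φp x - φp y| ≤ C' * (Real.sqrt θ) ^ n) :=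
  sinai_lemma_general d A φ C θ hθ0 hθ1 hvar
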